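/- For every quaternion matrix H ∈ ℍ^{n×n} and every vector q ∈ ℍ^n, the real part of the quaternion quadratic form equals the real quadratic form of Λ(H): Re(q* H q) = x(q)ᵀ Λ(H) x(q), where q* H q = Σ_{k,l} conj(q_k) H_{kl} q_l. -/

import Mathlib

open Matrix

/-- The real `4n × 4n` block matrix `Λ(H)` associated with a quaternion matrix `H`,
indexed by `Fin 4 × Fin n` with block order `R, I, J, K`. -/
noncomputable def lambdaMat {n : ℕ} (H : Matrix (Fin n) (Fin n) (Quaternion ℝ)) :
    Matrix (Fin 4 × Fin n) (Fin 4 × Fin n) ℝ := fun p q =>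
  ![![(H p.2 q.2).re, -(H p.2 q.2).imI, -(H p.2 q.2).imJ, -(H p.2 q.2).imK],
    ![(H p.2 q.2).imI, (H p.2 q.2).re, -(H p.2 q.2).imK, (H p.2 q.2).imJ],
    ![(H p.2 q.2).imJ, (H p.2 q.2).imK, (H p.2 q.2).re, -(H p.2 q.2).imI],
    ![(H p.2 q.2).imK, -(H p.2 q.2).imJ, (H p.2 q.2).imI, (H p.2 q.2).re]] p.1 q.1

/-- The stacked real vector `x(q) = (q_R, q_I, q_J, q_K)` of a quaternion vector `q`. -/
noncomputable def xvec {n : ℕ} (q : Fin n → Quaternion ℝ) : Fin 4 × Fin n → ℝ := fun p =>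
  ![(q p.2).re, (q p.2).imI, (q p.2).imJ, (q p.2).imK] p.1

/-! The real part of `star a * h * b` is a real bilinear form in the components of `a` and `b`,
whose `4 × 4` matrix is the corresponding block of `Λ(H)`; summing over all blocks gives the
quadratic form of `Λ(H)`. -/

theorem Quaternion.re_sum {R ι : Type*} [CommRing R] (s : Finset ι) (f : ι → Quaternion R) :
    (∑ i ∈ s, f i).re = ∑ i ∈ s, (f i).re :=
  map_sum (QuaternionAlgebra.reₗ _ _ _) f s

theorem Matrix.dotProduct_mulVec_prod {R α β : Type*} [CommSemiring R] [Fintype α] [Fintype β]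
    (x y : α × β → R) (A : Matrix (α × β) (α × β) R) :
    x ⬝ᵥ A *ᵥ y = ∑ b, ∑ b', ∑ a, ∑ a', x (a, b) * A (a, b) (a', b') * y (a', b') := by
  simp only [dotProduct, mulVec, Finset.mul_sum, Fintype.sum_prod_type, mul_assoc]
  rw [Finset.sum_comm]
  refine Finset.sum_congr rfl fun b _ => ?_
  conv_rhs => rw [Finset.sum_comm]
  exact Finset.sum_congr rfl fun _ _ => Finset.sum_comm

theorem re_star_mul_mul_eq_sum_lambdaMat {n : ℕ} (H : Matrix (Fin n) (Fin n) (Quaternion ℝ))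
    (q : Fin n → Quaternion ℝ) (k l : Fin n) :
    (star (q k) * H k l * q l).re =
      ∑ i : Fin 4, ∑ j : Fin 4, xvec q (i, k) * lambdaMat H (i, k) (j, l) * xvec q (j, l) := by
  simp only [Fin.sum_univ_four, lambdaMat, xvec, cons_val, Quaternion.re_mul, Quaternion.imI_mul,
    Quaternion.imJ_mul, Quaternion.imK_mul, Quaternion.re_star, Quaternion.imI_star,
    Quaternion.imJ_star, Quaternion.imK_star]
  ring

/-- For every quaternion matrix `H` and quaternion vector `q`,
`Re(q* H q) = x(q)ᵀ Λ(H) x(q)`. -/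
theorem real_part_quadratic_form_eq_lambda {n : ℕ}
    (H : Matrix (Fin n) (Fin n) (Quaternion ℝ)) (q : Fin n → Quaternion ℝ) :
    (∑ k, ∑ l, star (q k) * H k l * q l).re =
      xvec q ⬝ᵥ (lambdaMat H).mulVec (xvec q) := by
  rw [dotProduct_mulVec_prod]
  simp only [Quaternion.re_sum, re_star_mul_mul_eq_sum_lambdaMat]
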